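/- Let ω be a positive C¹ function on an interval (a,b) whose derivative ω' is nondecreasing and positive. Suppose j ∈ ℤ, p ≥ 1, and a < a_{j-1} < a_j < a_{j+1} < ⋯ < a_{j+p} < b are points with ω(a_i) = 2^i for i = j-1, j, ..., j+p. Then a_{j+p} - a_{j+p-1} ≤ 2^p (a_j - a_{j-1}). -/
import Mathlib


/-- If ω is a positive C¹ function on (a,b) with nondecreasing positive
derivative ω', and a < a_{j-1} < a_j < ⋯ < a_{j+p} < b are points with ω(a_i) = 2^i,
then a_{j+p} - a_{j+p-1} ≤ 2^p (a_j - a_{j-1}). -/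
theorem stmt_18 (a b : ℝ) (ω ω' : ℝ → ℝ)
    (hderiv : ∀ t ∈ Set.Ioo a b, HasDerivAt ω (ω' t) t)
    (hcont : ContinuousOn ω' (Set.Ioo a b))
    (hωpos : ∀ t ∈ Set.Ioo a b, 0 < ω t)
    (hω'pos : ∀ t ∈ Set.Ioo a b, 0 < ω' t)
    (hω'mono : MonotoneOn ω' (Set.Ioo a b))
    (j : ℤ) (p : ℕ) (hp : 1 ≤ p)
    (A : ℤ → ℝ)
    (hmem : ∀ i ∈ Set.Icc (j - 1) (j + (p : ℤ)), A i ∈ Set.Ioo a b)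
    (hA : StrictMonoOn A (Set.Icc (j - 1) (j + (p : ℤ))))
    (hval : ∀ i ∈ Set.Icc (j - 1) (j + (p : ℤ)), ω (A i) = (2 : ℝ) ^ i) :
    A (j + p) - A (j + p - 1) ≤ (2 : ℝ) ^ p * (A j - A (j - 1)) := by
  have hp' : (1:ℤ) ≤ (p:ℤ) := by exact_mod_cast hp
  have h0 : j - 1 ∈ Set.Icc (j - 1) (j + (p : ℤ)) := Set.mem_Icc.mpr ⟨le_refl _, by omega⟩
  have h1 : j ∈ Set.Icc (j - 1) (j + (p : ℤ)) := Set.mem_Icc.mpr ⟨by omega, by omega⟩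
  have h2 : j + (p:ℤ) - 1 ∈ Set.Icc (j - 1) (j + (p : ℤ)) := Set.mem_Icc.mpr ⟨by omega, by omega⟩
  have h3 : j + (p:ℤ) ∈ Set.Icc (j - 1) (j + (p : ℤ)) := Set.mem_Icc.mpr ⟨by omega, le_refl _⟩
  have hx01 : A (j-1) < A j := hA h0 h1 (by omega)
  have hx12 : A j ≤ A (j + (p:ℤ) - 1) := hA.monotoneOn h1 h2 (by omega)
  have hx23 : A (j + (p:ℤ) - 1) < A (j + (p:ℤ)) := hA h2 h3 (by omega)
  -- subsets
  have hsub1 : Set.Icc (A (j-1)) (A j) ⊆ Set.Ioo a b :=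
    Set.Icc_subset_Ioo (hmem _ h0).1 (hmem _ h1).2
  have hsub2 : Set.Icc (A (j + (p:ℤ) - 1)) (A (j + (p:ℤ))) ⊆ Set.Ioo a b :=
    Set.Icc_subset_Ioo (hmem _ h2).1 (hmem _ h3).2
  have hc1 : ContinuousOn ω (Set.Icc (A (j-1)) (A j)) :=
    fun t ht => ((hderiv t (hsub1 ht)).continuousAt).continuousWithinAt
  have hc2 : ContinuousOn ω (Set.Icc (A (j + (p:ℤ) - 1)) (A (j + (p:ℤ)))) :=
    fun t ht => ((hderiv t (hsub2 ht)).continuousAt).continuousWithinAt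
  obtain ⟨ξ, hξmem, hξ⟩ := exists_hasDerivAt_eq_slope ω ω' hx01 hc1
    (fun t ht => hderiv t (hsub1 (Set.Ioo_subset_Icc_self ht)))
  obtain ⟨η, hηmem, hη⟩ := exists_hasDerivAt_eq_slope ω ω' hx23 hc2
    (fun t ht => hderiv t (hsub2 (Set.Ioo_subset_Icc_self ht)))
  have hξab : ξ ∈ Set.Ioo a b := hsub1 (Set.Ioo_subset_Icc_self hξmem)
  have hηab : η ∈ Set.Ioo a b := hsub2 (Set.Ioo_subset_Icc_self hηmem)
  have hξη : ξ ≤ η := le_of_lt (lt_of_lt_of_le hξmem.2 (lt_of_le_of_lt hx12 hηmem.1).le)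
  have hmono : ω' ξ ≤ ω' η := hω'mono hξab hηab hξη
  have hξpos : 0 < ω' ξ := hω'pos ξ hξab
  have hηpos : 0 < ω' η := hω'pos η hηab
  -- values
  have two_ne : (2:ℝ) ≠ 0 := two_ne_zero
  have hv0 := hval _ h0
  have hv1 := hval _ h1
  have hv2 := hval _ h2
  have hv3 := hval _ h3
  have hd1 : ω (A j) - ω (A (j-1)) = (2:ℝ)^(j-1) := by
    rw [hv1, hv0]
    have : (2:ℝ)^j = (2:ℝ)^(j-1) * 2 := by
      rw [← zpow_add_one₀ two_ne]
      congr 1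
      ring
    rw [this]; ring
  have hd2 : ω (A (j + (p:ℤ))) - ω (A (j + (p:ℤ) - 1)) = (2:ℝ)^(j + (p:ℤ) - 1) := by
    rw [hv3, hv2]
    have : (2:ℝ)^(j + (p:ℤ)) = (2:ℝ)^(j + (p:ℤ) - 1) * 2 := by
      rw [← zpow_add_one₀ two_ne]
      congr 1
      ring
    rw [this]; ring
  have heq1 : ω' ξ * (A j - A (j-1)) = (2:ℝ)^(j-1) := by
    rw [hξ, div_mul_cancel₀ _ (sub_ne_zero.mpr hx01.ne'), hd1]
  have heq2 : ω' η * (A (j + (p:ℤ)) - A (j + (p:ℤ) - 1)) = (2:ℝ)^(j + (p:ℤ) - 1) := by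
    rw [hη, div_mul_cancel₀ _ (sub_ne_zero.mpr hx23.ne'), hd2]
  have hsplit : (2:ℝ)^(j + (p:ℤ) - 1) = (2:ℝ)^(p:ℕ) * (2:ℝ)^(j-1) := by
    rw [← zpow_natCast (2:ℝ) p, ← zpow_add₀ two_ne]
    congr 1
    ring
  -- finish
  have key : ω' ξ * (A (j + (p:ℤ)) - A (j + (p:ℤ) - 1)) ≤
      ω' ξ * ((2:ℝ)^(p:ℕ) * (A j - A (j-1))) := by
    calc ω' ξ * (A (j + (p:ℤ)) - A (j + (p:ℤ) - 1))
        ≤ ω' η * (A (j + (p:ℤ)) - A (j + (p:ℤ) - 1)) := by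
          apply mul_le_mul_of_nonneg_right hmono (le_of_lt (sub_pos.mpr hx23))
      _ = (2:ℝ)^(p:ℕ) * (2:ℝ)^(j-1) := by rw [heq2, hsplit]
      _ = (2:ℝ)^(p:ℕ) * (ω' ξ * (A j - A (j-1))) := by rw [heq1]
      _ = ω' ξ * ((2:ℝ)^(p:ℕ) * (A j - A (j-1))) := by ring
  exact le_of_mul_le_mul_left key hξpos
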